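/- arXiv:2310.18692 — 2 statements merged into one kernel-verified Lean document; each statement's English description precedes it below -/
import Mathlib

section
/- Let d be an equireplicate connected block design with v treatments each replicated r times, b blocks of size k (so bk = vr), intrablock matrix C = rI_v − (1/k)NNᵀ and dual intrablock matrix C̃ = kI_b − (1/r)NᵀN. Then tr(C̃^+) = (r/k) tr(C^+) + (b−v)/k. -/
open BigOperators Matrix

/-- The four Penrose conditions: `Ap` is the Moore–Penrose inverse of `A`. -/
def IsMoorePenrose {n : ℕ} (A Ap : Matrix (Fin n) (Fin n) ℝ) : Prop :=
  A * Ap * A = A ∧ Ap * A * Ap = Ap ∧ (A * Ap)ᵀ = A * Ap ∧ (Ap * A)ᵀ = Ap * A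

lemma mp_transpose {n : ℕ} {A Ap : Matrix (Fin n) (Fin n) ℝ} (h : IsMoorePenrose A Ap) :
    IsMoorePenrose Aᵀ Apᵀ := by
  obtain ⟨h1, h2, h3, h4⟩ := h
  refine ⟨?_, ?_, ?_, ?_⟩
  · rw [← transpose_mul, ← transpose_mul, mul_assoc, ← mul_assoc] at *
    rw [h1]
  · rw [← transpose_mul, ← transpose_mul, mul_assoc, ← mul_assoc] at *
    rw [h2]
  · rw [← transpose_mul, transpose_transpose, h4]
  · rw [← transpose_mul, transpose_transpose, h3]

lemma mp_unique {n : ℕ} {A B C : Matrix (Fin n) (Fin n) ℝ}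
    (hB : IsMoorePenrose A B) (hC : IsMoorePenrose A C) : B = C := by
  obtain ⟨b1, b2, b3, b4⟩ := hB
  obtain ⟨c1, c2, c3, c4⟩ := hC
  have hAB : A * B = A * C := by
    calc A * B = (A * B)ᵀ := b3.symm
    _ = Bᵀ * Aᵀ := by rw [transpose_mul]
    _ = Bᵀ * (A * C * A)ᵀ := by rw [c1]
    _ = Bᵀ * (Aᵀ * (A * C)ᵀ) := by rw [transpose_mul]
    _ = Bᵀ * Aᵀ * (A * C) := by rw [c3, mul_assoc]
    _ = (A * B)ᵀ * (A * C) := by rw [transpose_mul]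
    _ = A * B * (A * C) := by rw [b3]
    _ = A * B * A * C := by noncomm_ring
    _ = A * C := by rw [b1]
  have hBA : B * A = C * A := by
    calc B * A = (B * A)ᵀ := b4.symm
    _ = Aᵀ * Bᵀ := by rw [transpose_mul]
    _ = (A * C * A)ᵀ * Bᵀ := by rw [c1]
    _ = (C * A)ᵀ * (Aᵀ * Bᵀ) := by rw [transpose_mul (A*C) A, transpose_mul A C, transpose_mul C A, mul_assoc, mul_assoc, mul_assoc]
    _ = C * A * (B * A)ᵀ := by rw [c4, transpose_mul]
    _ = C * A * (B * A) := by rw [b4]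
    _ = C * (A * B * A) := by noncomm_ring
    _ = C * A := by rw [b1]
  calc B = B * A * B := b2.symm
  _ = C * A * B := by rw [hBA]
  _ = C * (A * B) := by rw [mul_assoc]
  _ = C * (A * C) := by rw [hAB]
  _ = C * A * C := by rw [mul_assoc]
  _ = C := c2

lemma proj_const {n : ℕ} (hn : 0 < n) (A Ap : Matrix (Fin n) (Fin n) ℝ)
    (hmp : IsMoorePenrose A Ap)
    (h1 : A.mulVec (fun _ => 1) = 0) (hrank : A.rank = n - 1) :
    ∀ i j, (1 - Ap * A) i j = (n : ℝ)⁻¹ := by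
  set E : Matrix (Fin n) (Fin n) ℝ := 1 - Ap * A with hE
  have hEsym : Eᵀ = E := by
    rw [hE, transpose_sub, transpose_one, hmp.2.2.2]
  have hAE : A * E = 0 := by
    rw [hE, Matrix.mul_sub, Matrix.mul_one, ← Matrix.mul_assoc, hmp.1, sub_self]
  have hone_ne : (fun _ => (1:ℝ) : Fin n → ℝ) ≠ 0 := by
    intro h
    have := congrFun h ⟨0, hn⟩
    norm_num at this
  have hker : LinearMap.ker A.mulVecLin = Submodule.span ℝ {(fun _ => (1:ℝ) : Fin n → ℝ)} := by
    symm
    apply Submodule.eq_of_le_of_finrank_eq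
    · rw [Submodule.span_le, Set.singleton_subset_iff]
      simpa [LinearMap.mem_ker] using h1
    · rw [finrank_span_singleton hone_ne]
      have h2 := LinearMap.finrank_range_add_finrank_ker A.mulVecLin
      rw [Module.finrank_pi, Fintype.card_fin] at h2
      have h3 : Module.finrank ℝ (LinearMap.range A.mulVecLin) = n - 1 := hrank
      omega
  have hcol : ∀ j i i', E i j = E i' j := by
    intro j i i'
    have hmem : (fun l => E l j) ∈ LinearMap.ker A.mulVecLin := by
      rw [LinearMap.mem_ker]
      funext i''
      have h0 : (A * E) i'' j = 0 := by rw [hAE]; rfl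
      simpa [Matrix.mulVecLin_apply, Matrix.mulVec, dotProduct, Matrix.mul_apply] using h0
    rw [hker, Submodule.mem_span_singleton] at hmem
    obtain ⟨a, ha⟩ := hmem
    have hi := congrFun ha i
    have hi' := congrFun ha i'
    simp at hi hi'
    rw [← hi, ← hi']
  have i0 : Fin n := ⟨0, hn⟩
  have hconst : ∀ i j, E i j = E i0 i0 := by
    intro i j
    have e1 : E i j = E i0 j := hcol j i i0
    have e2 : E i0 j = E j i0 := by
      have := congrFun (congrFun hEsym j) i0
      simpa [Matrix.transpose_apply] using this
    have e3 : E j i0 = E i0 i0 := hcol i0 j i0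
    rw [e1, e2, e3]
  have hrowsum : E.mulVec (fun _ => 1) = fun _ => 1 := by
    rw [hE, Matrix.sub_mulVec, Matrix.one_mulVec, ← Matrix.mulVec_mulVec, h1,
      Matrix.mulVec_zero, sub_zero]
  have hc : (n : ℝ) * E i0 i0 = 1 := by
    have h := congrFun hrowsum i0
    simp only [Matrix.mulVec, dotProduct, mul_one] at h
    calc (n : ℝ) * E i0 i0 = ∑ _j : Fin n, E i0 i0 := by
          simp [Finset.sum_const, mul_comm]
      _ = ∑ j : Fin n, E i0 j := Finset.sum_congr rfl (fun j _ => (hconst i0 j).symm)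
      _ = 1 := h
  intro i j
  rw [hconst i j]
  have hn' : (n : ℝ) ≠ 0 := Nat.cast_ne_zero.mpr hn.ne'
  field_simp
  linarith [hc]

/-- For an equireplicate connected block design (`bk = vr`), with
`C = rI_v − (1/k)NNᵀ` and `C̃ = kI_b − (1/r)NᵀN`,
`tr(C̃⁺) = (r/k) tr(C⁺) + (b−v)/k`. -/
theorem stmt_12 (v b k rr : ℕ) (hv : 0 < v) (hb : 0 < b) (hk : 0 < k) (hr : 0 < rr)
    (hbk : b * k = v * rr)
    (N : Fin v → Fin b → ℕ) (hrow : ∀ i, ∑ j, N i j = rr) (hcol : ∀ j, ∑ i, N i j = k)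
    (M : Matrix (Fin v) (Fin b) ℝ) (hM : ∀ i j, M i j = (N i j : ℝ))
    (C Cp : Matrix (Fin v) (Fin v) ℝ)
    (hC : C = (rr : ℝ) • (1 : Matrix (Fin v) (Fin v) ℝ) - (k : ℝ)⁻¹ • (M * Mᵀ))
    (Ct Ctp : Matrix (Fin b) (Fin b) ℝ)
    (hCt : Ct = (k : ℝ) • (1 : Matrix (Fin b) (Fin b) ℝ) - (rr : ℝ)⁻¹ • (Mᵀ * M))
    (hrankC : C.rank = v - 1) (hrankCt : Ct.rank = b - 1)
    (hmpC : IsMoorePenrose C Cp) (hmpCt : IsMoorePenrose Ct Ctp) :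
    Ctp.trace = ((rr : ℝ) / k) * Cp.trace + ((b : ℝ) - v) / k := by
  have hkR : (k : ℝ) ≠ 0 := Nat.cast_ne_zero.mpr hk.ne'
  have hrR : (rr : ℝ) ≠ 0 := Nat.cast_ne_zero.mpr hr.ne'
  have hvR : (v : ℝ) ≠ 0 := Nat.cast_ne_zero.mpr hv.ne'
  have hbR : (b : ℝ) ≠ 0 := Nat.cast_ne_zero.mpr hb.ne'
  -- row/column sums of M
  have hMrowsum : ∀ i, ∑ j, M i j = (rr : ℝ) := by
    intro i; simp only [hM]; rw [← Nat.cast_sum, hrow]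
  have hMcolsum : ∀ j, ∑ i, M i j = (k : ℝ) := by
    intro j; simp only [hM]; rw [← Nat.cast_sum, hcol]
  have hMrow : M.mulVec (fun _ => 1) = fun _ => (rr : ℝ) := by
    funext i; simp only [Matrix.mulVec, dotProduct, mul_one]; exact hMrowsum i
  have hMcol : Mᵀ.mulVec (fun _ => 1) = fun _ => (k : ℝ) := by
    funext j; simp only [Matrix.mulVec, dotProduct, mul_one, Matrix.transpose_apply]
    exact hMcolsum j
  -- C and Ct kill the all-ones vector
  have hMMt1 : (M * Mᵀ).mulVec (fun _ => 1) = fun _ => (k : ℝ) * rr := by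
    rw [← Matrix.mulVec_mulVec, hMcol]
    have : (fun _ => (k : ℝ) : Fin b → ℝ) = (k : ℝ) • (fun _ => (1:ℝ)) := by
      funext _; simp
    rw [this, Matrix.mulVec_smul, hMrow]
    funext _; simp
  have hMtM1 : (Mᵀ * M).mulVec (fun _ => 1) = fun _ => (rr : ℝ) * k := by
    rw [← Matrix.mulVec_mulVec, hMrow]
    have : (fun _ => (rr : ℝ) : Fin v → ℝ) = (rr : ℝ) • (fun _ => (1:ℝ)) := by
      funext _; simp
    rw [this, Matrix.mulVec_smul, hMcol]
    funext _; simp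
  have hC1 : C.mulVec (fun _ => 1) = 0 := by
    rw [hC, Matrix.sub_mulVec, Matrix.smul_mulVec, Matrix.smul_mulVec,
      Matrix.one_mulVec, hMMt1]
    funext i
    simp only [Pi.sub_apply, Pi.smul_apply, smul_eq_mul, mul_one, Pi.zero_apply]
    field_simp; simp
  have hCt1 : Ct.mulVec (fun _ => 1) = 0 := by
    rw [hCt, Matrix.sub_mulVec, Matrix.smul_mulVec, Matrix.smul_mulVec,
      Matrix.one_mulVec, hMtM1]
    funext j
    simp only [Pi.sub_apply, Pi.smul_apply, smul_eq_mul, mul_one, Pi.zero_apply]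
    field_simp; simp
  -- symmetry
  have hCsym : Cᵀ = C := by
    rw [hC]; simp [transpose_sub, transpose_smul, transpose_one, transpose_mul,
      transpose_transpose]
  have hCtsym : Ctᵀ = Ct := by
    rw [hCt]; simp [transpose_sub, transpose_smul, transpose_one, transpose_mul,
      transpose_transpose]
  have hCpsym : Cpᵀ = Cp := by
    have h := mp_transpose hmpC
    rw [hCsym] at h
    exact mp_unique h hmpC
  have hCtpsym : Ctpᵀ = Ctp := by
    have h := mp_transpose hmpCt
    rw [hCtsym] at h
    exact mp_unique h hmpCt
  have hPcomm : C * Cp = Cp * C := by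
    conv_lhs => rw [← hmpC.2.2.1]
    rw [transpose_mul, hCpsym, hCsym]
  have hQcomm : Ct * Ctp = Ctp * Ct := by
    conv_lhs => rw [← hmpCt.2.2.1]
    rw [transpose_mul, hCtpsym, hCtsym]
  -- the projections are constant matrices
  have hEa := proj_const hv C Cp hmpC hC1 hrankC
  have hFa := proj_const hb Ct Ctp hmpCt hCt1 hrankCt
  -- intertwining of projections
  have hEM : (1 - Cp * C) * M = M * (1 - Ctp * Ct) := by
    ext i j
    rw [Matrix.mul_apply, Matrix.mul_apply]
    calc ∑ l, (1 - Cp * C) i l * M l j = ∑ l, (v : ℝ)⁻¹ * M l j := by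
          exact Finset.sum_congr rfl fun l _ => by rw [hEa]
      _ = (v : ℝ)⁻¹ * k := by rw [← Finset.mul_sum, hMcolsum]
      _ = (b : ℝ)⁻¹ * rr := by
          have : (b : ℝ) * k = (v : ℝ) * rr := by exact_mod_cast congrArg (Nat.cast : ℕ → ℝ) hbk
          field_simp
          linarith [this]
      _ = ∑ l, M i l * (b : ℝ)⁻¹ := by rw [← Finset.sum_mul, hMrowsum, mul_comm]
      _ = ∑ l, M i l * (1 - Ctp * Ct) l j := by
          exact Finset.sum_congr rfl fun l _ => by rw [hFa]
  have hPM : (Cp * C) * M = M * (Ctp * Ct) := by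
    calc (Cp * C) * M = M - (1 - Cp * C) * M := by
          rw [Matrix.sub_mul, Matrix.one_mul, sub_sub_cancel]
      _ = M - M * (1 - Ctp * Ct) := by rw [hEM]
      _ = M * (Ctp * Ct) := by rw [Matrix.mul_sub, Matrix.mul_one, sub_sub_cancel]
  -- intertwining of C and Ct
  have hCM : C * M = ((rr : ℝ) / k) • (M * Ct) := by
    rw [hC, hCt]
    simp only [Matrix.sub_mul, Matrix.mul_sub, Matrix.smul_mul, Matrix.mul_smul,
      Matrix.one_mul, Matrix.mul_one, smul_sub, Matrix.mul_assoc]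
    rw [smul_smul, smul_smul]
    congr 1
    · congr 1; field_simp
    · congr 1; field_simp
  -- the key identity
  have hPMr : Cp * (C * M) = M * (Ctp * Ct) := by rw [← Matrix.mul_assoc]; exact hPM
  have hkey : M * Ctp = ((rr : ℝ) / k) • (Cp * M) := by
    calc M * Ctp = M * (Ctp * Ct * Ctp) := by rw [hmpCt.2.1]
      _ = M * (Ctp * Ct) * Ctp := by rw [← Matrix.mul_assoc]
      _ = Cp * (C * M) * Ctp := by rw [hPMr]
      _ = Cp * (C * M * Ctp) := by rw [Matrix.mul_assoc]
      _ = Cp * (((rr : ℝ) / k) • (M * Ct) * Ctp) := by rw [hCM]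
      _ = ((rr : ℝ) / k) • (Cp * (M * Ct * Ctp)) := by
          rw [Matrix.smul_mul, Matrix.mul_smul]
      _ = ((rr : ℝ) / k) • (Cp * (M * (Ctp * Ct))) := by
          rw [Matrix.mul_assoc M Ct Ctp, hQcomm]
      _ = ((rr : ℝ) / k) • (Cp * (Cp * (C * M))) := by rw [hPMr]
      _ = ((rr : ℝ) / k) • (Cp * (Cp * C) * M) := by
          simp only [Matrix.mul_assoc]
      _ = ((rr : ℝ) / k) • (Cp * (C * Cp) * M) := by rw [← hPcomm]
      _ = ((rr : ℝ) / k) • ((Cp * C * Cp) * M) := by rw [← Matrix.mul_assoc Cp C Cp]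
      _ = ((rr : ℝ) / k) • (Cp * M) := by rw [hmpC.2.1]
  -- traces of the projections
  have hTrP : (Cp * C).trace = (v : ℝ) - 1 := by
    have h1 : (1 - Cp * C).trace = 1 := by
      rw [Matrix.trace]
      simp only [Matrix.diag_apply, hEa]
      rw [Finset.sum_const, Finset.card_univ, Fintype.card_fin, nsmul_eq_mul]
      field_simp
    rw [Matrix.trace_sub, Matrix.trace_one, Fintype.card_fin] at h1
    linarith
  have hTrQ : (Ctp * Ct).trace = (b : ℝ) - 1 := by
    have h1 : (1 - Ctp * Ct).trace = 1 := by
      rw [Matrix.trace]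
      simp only [Matrix.diag_apply, hFa]
      rw [Finset.sum_const, Finset.card_univ, Fintype.card_fin, nsmul_eq_mul]
      field_simp
    rw [Matrix.trace_sub, Matrix.trace_one, Fintype.card_fin] at h1
    linarith
  -- M * Mᵀ in terms of C
  have hMMt : M * Mᵀ = ((k : ℝ) * rr) • 1 - (k : ℝ) • C := by
    rw [hC, smul_sub, smul_smul, smul_smul]
    rw [mul_inv_cancel₀ hkR, one_smul, mul_comm]
    abel
  -- trace computation
  have hsplit : (k : ℝ) • Ctp = Ct * Ctp + (rr : ℝ)⁻¹ • ((Mᵀ * M) * Ctp) := by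
    have : Ct * Ctp = (k : ℝ) • Ctp - (rr : ℝ)⁻¹ • ((Mᵀ * M) * Ctp) := by
      rw [hCt, Matrix.sub_mul, smul_mul_assoc, smul_mul_assoc, Matrix.one_mul]
    rw [this]; abel
  have htr1 : ((Mᵀ * M) * Ctp).trace = ((rr : ℝ) / k) * ((k : ℝ) * rr * Cp.trace - k * ((v : ℝ) - 1)) := by
    calc ((Mᵀ * M) * Ctp).trace = (Mᵀ * (M * Ctp)).trace := by rw [Matrix.mul_assoc]
      _ = (Mᵀ * (((rr : ℝ) / k) • (Cp * M))).trace := by rw [hkey]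
      _ = ((rr : ℝ) / k) * ((Mᵀ * (Cp * M)).trace) := by
          rw [Matrix.mul_smul, Matrix.trace_smul, smul_eq_mul]
      _ = ((rr : ℝ) / k) * ((Cp * M * Mᵀ).trace) := by rw [Matrix.trace_mul_comm]
      _ = ((rr : ℝ) / k) * ((Cp * (M * Mᵀ)).trace) := by rw [Matrix.mul_assoc]
      _ = ((rr : ℝ) / k) * ((k : ℝ) * rr * Cp.trace - k * ((v : ℝ) - 1)) := by
          rw [hMMt, Matrix.mul_sub, mul_smul_comm, mul_smul_comm, Matrix.mul_one,
            Matrix.trace_sub, Matrix.trace_smul, Matrix.trace_smul, smul_eq_mul,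
            smul_eq_mul, hTrP]
  have hmain : (k : ℝ) * Ctp.trace = (b : ℝ) - 1 + (rr : ℝ)⁻¹ * (((rr : ℝ) / k) * ((k : ℝ) * rr * Cp.trace - k * ((v : ℝ) - 1))) := by
    have h := congrArg Matrix.trace hsplit
    rw [Matrix.trace_smul, Matrix.trace_add, Matrix.trace_smul, smul_eq_mul,
      smul_eq_mul, htr1, Matrix.trace_mul_comm, hTrQ] at h
    linarith
  have h2 : (k : ℝ) * Ctp.trace = (rr : ℝ) * Cp.trace + ((b : ℝ) - v) := by
    rw [hmain]
    field_simp
    ring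
  field_simp
  ring_nf at h2 ⊢
  linarith [h2]
end

section
/- Let d be a balanced incomplete block design BIBD(v, b, r, k, λ) with λ(v−1) = r(k−1). Then its intrablock matrix C = rI_v − (1/k)NNᵀ equals (λv/k)(I_v − v^{−1}J_{vv}), and tr(C^+) = k(v−1)/(λv) = (v−1)^2/(b(k−1)). Hence a BIB design attains the bound L and has A_{cc}eff = 1. -/
open BigOperators Matrix

theorem mp_unique_s15 {n : ℕ} (A X Y : Matrix (Fin n) (Fin n) ℝ)
    (hX : IsMoorePenrose A X) (hY : IsMoorePenrose A Y) : X = Y := by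
  obtain ⟨hX1, hX2, hX3, hX4⟩ := hX
  obtain ⟨hY1, hY2, hY3, hY4⟩ := hY
  have hX3' : Xᵀ * Aᵀ = A * X := by rw [← transpose_mul, hX3]
  have hX4' : Aᵀ * Xᵀ = X * A := by rw [← transpose_mul, hX4]
  have hY3' : Yᵀ * Aᵀ = A * Y := by rw [← transpose_mul, hY3]
  have hY4' : Aᵀ * Yᵀ = Y * A := by rw [← transpose_mul, hY4]
  have hY1T : Aᵀ * (Yᵀ * Aᵀ) = Aᵀ := by
    have := congrArg Matrix.transpose hY1
    simpa [transpose_mul, Matrix.mul_assoc] using this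
  have hX1T : Aᵀ * (Xᵀ * Aᵀ) = Aᵀ := by
    have := congrArg Matrix.transpose hX1
    simpa [transpose_mul, Matrix.mul_assoc] using this
  have h1 : X = X * (A * Y) := by
    calc X = X * (A * X) := by rw [← Matrix.mul_assoc, hX2]
    _ = X * (Xᵀ * Aᵀ) := by rw [hX3']
    _ = X * (Xᵀ * (Aᵀ * (Yᵀ * Aᵀ))) := by rw [hY1T]
    _ = X * (Xᵀ * Aᵀ) * (Yᵀ * Aᵀ) := by simp only [Matrix.mul_assoc]
    _ = X * (A * X) * (A * Y) := by rw [hX3', hY3']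
    _ = X * (A * Y) := by rw [show X * (A * X) = X by rw [← Matrix.mul_assoc, hX2]]
  have h2 : Y = X * (A * Y) := by
    calc Y = (Y * A) * Y := by rw [hY2]
    _ = (Aᵀ * Yᵀ) * Y := by rw [hY4']
    _ = ((Aᵀ * (Xᵀ * Aᵀ)) * Yᵀ) * Y := by rw [hX1T]
    _ = (Aᵀ * Xᵀ) * ((Aᵀ * Yᵀ) * Y) := by simp only [Matrix.mul_assoc]
    _ = (X * A) * ((Y * A) * Y) := by rw [hX4', hY4']
    _ = X * (A * Y) := by rw [hY2, Matrix.mul_assoc]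
  rw [h1, ← h2]

/-- For a `BIBD(v,b,r,k,λ)`, the intrablock matrix `C = rI − (1/k)NNᵀ` equals
`(λv/k)(I − v⁻¹J)`, and `tr(C⁺) = k(v−1)/(λv) = (v−1)²/(b(k−1))`; hence a BIB design
attains the bound `L` and has `A_cc eff = 1`. -/
theorem stmt_15 (v b rr k lam : ℕ) (hv : 2 ≤ v) (hb : 0 < b) (hr : 0 < rr)
    (hk : 0 < k) (hlam : 0 < lam)
    (hbk : b * k = v * rr) (hlv : lam * (v - 1) = rr * (k - 1))
    (N : Fin v → Fin b → ℕ) (hrow : ∀ i, ∑ j, N i j = rr) (hcol : ∀ j, ∑ i, N i j = k)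
    (M : Matrix (Fin v) (Fin b) ℝ) (hM : ∀ i j, M i j = (N i j : ℝ))
    (hNNT : M * Mᵀ = ((rr : ℝ) - lam) • (1 : Matrix (Fin v) (Fin v) ℝ) +
      (lam : ℝ) • Matrix.of (fun _ _ => (1 : ℝ)))
    (C Cp : Matrix (Fin v) (Fin v) ℝ)
    (hC : C = (rr : ℝ) • (1 : Matrix (Fin v) (Fin v) ℝ) - (k : ℝ)⁻¹ • (M * Mᵀ))
    (hmp : IsMoorePenrose C Cp) :
    C = ((lam : ℝ) * v / k) • ((1 : Matrix (Fin v) (Fin v) ℝ) -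
        (v : ℝ)⁻¹ • Matrix.of (fun _ _ => (1 : ℝ))) ∧
    Cp.trace = (k : ℝ) * ((v : ℝ) - 1) / ((lam : ℝ) * v) ∧
    Cp.trace = ((v : ℝ) - 1) ^ 2 / ((b : ℝ) * ((k : ℝ) - 1)) := by
  -- basic numeric facts
  have hk2 : 2 ≤ k := by
    rcases Nat.lt_or_ge k 2 with h | h
    · interval_cases k
      · simp at hlv
        omega
    · exact h
  have hvR : (0:ℝ) < v := by positivity
  have hkR : (0:ℝ) < k := by positivity
  have hlamR : (0:ℝ) < lam := by positivity
  have hbR : (0:ℝ) < b := by positivity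
  have hkR1 : (1:ℝ) < k := by exact_mod_cast hk2
  have hvR1 : (1:ℝ) < v := by exact_mod_cast hv
  have hlvR : (lam:ℝ) * ((v:ℝ) - 1) = (rr:ℝ) * ((k:ℝ) - 1) := by
    have h1v : 1 ≤ v := by omega
    have h1k : 1 ≤ k := by omega
    have := congrArg (Nat.cast : ℕ → ℝ) hlv
    push_cast [Nat.cast_sub h1v, Nat.cast_sub h1k] at this
    linarith [this]
  have hbkR : (b:ℝ) * k = (v:ℝ) * rr := by exact_mod_cast hbk
  set J : Matrix (Fin v) (Fin v) ℝ := Matrix.of (fun _ _ => (1:ℝ)) with hJdef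
  set c : ℝ := (lam : ℝ) * v / k with hcdef
  have hc0 : c ≠ 0 := by positivity
  set P : Matrix (Fin v) (Fin v) ℝ := (1 : Matrix (Fin v) (Fin v) ℝ) - (v : ℝ)⁻¹ • J with hPdef
  -- Part 1 : C = c • P
  have hCP : C = c • P := by
    rw [hC, hNNT, hPdef, hJdef]
    ext i j
    simp only [Matrix.sub_apply, Matrix.add_apply, Matrix.smul_apply, Matrix.one_apply,
      Matrix.of_apply, smul_eq_mul]
    rcases eq_or_ne i j with h | h
    · simp only [h, if_pos rfl, ↓reduceIte, hcdef]
      have hk0 : (k:ℝ) ≠ 0 := ne_of_gt hkR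
      have hv0 : (v:ℝ) ≠ 0 := ne_of_gt hvR
      field_simp
      linear_combination (-1:ℝ) * hlvR
    · simp only [if_neg h, hcdef]
      have hk0 : (k:ℝ) ≠ 0 := ne_of_gt hkR
      have hv0 : (v:ℝ) ≠ 0 := ne_of_gt hvR
      field_simp
      ring
  have hJJ : J * J = (v : ℝ) • J := by
    ext i j
    simp [hJdef, Matrix.mul_apply]
  have hJT : Jᵀ = J := by ext i j; simp [hJdef]
  have hPP : P * P = P := by
    rw [hPdef]
    simp only [sub_mul, mul_sub, one_mul, mul_one, Matrix.smul_mul, Matrix.mul_smul, hJJ,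
      smul_smul]
    rw [show (v:ℝ)⁻¹ * ((v:ℝ)⁻¹ * (v:ℝ)) = (v:ℝ)⁻¹ by field_simp]
    abel
  have hPT : Pᵀ = P := by
    rw [hPdef]
    simp [Matrix.transpose_sub, Matrix.transpose_smul, hJT]
  set Q : Matrix (Fin v) (Fin v) ℝ := c⁻¹ • P with hQdef
  have hCQ : C * Q = P := by
    rw [hCP, hQdef, Matrix.smul_mul, Matrix.mul_smul, smul_smul, mul_inv_cancel₀ hc0, one_smul,
      hPP]
  have hQC : Q * C = P := by
    rw [hCP, hQdef, Matrix.smul_mul, Matrix.mul_smul, smul_smul, inv_mul_cancel₀ hc0, one_smul,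
      hPP]
  have hQ : IsMoorePenrose C Q := by
    refine ⟨?_, ?_, ?_, ?_⟩
    · rw [hCQ, hCP, Matrix.mul_smul, hPP]
    · rw [hQC, hQdef, Matrix.mul_smul, hPP]
    · rw [hCQ, hPT]
    · rw [hQC, hPT]
  have hCpQ : Cp = Q := mp_unique_s15 C Cp Q hmp hQ
  -- trace computations
  have htrJ : J.trace = (v : ℝ) := by
    simp [hJdef, Matrix.trace, Matrix.diag]
  have htrP : P.trace = (v : ℝ) - 1 := by
    rw [hPdef, Matrix.trace_sub, Matrix.trace_smul, Matrix.trace_one, htrJ]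
    have hv0 : (v:ℝ) ≠ 0 := ne_of_gt hvR
    field_simp
    rw [Fintype.card_fin, smul_eq_mul, one_div, inv_mul_cancel₀ hv0]
  have htrQ : Cp.trace = c⁻¹ * ((v:ℝ) - 1) := by
    rw [hCpQ, hQdef, Matrix.trace_smul, htrP, smul_eq_mul]
  have ht1 : Cp.trace = (k : ℝ) * ((v : ℝ) - 1) / ((lam : ℝ) * v) := by
    rw [htrQ, hcdef]
    field_simp
  refine ⟨hCP, ht1, ?_⟩
  rw [ht1]
  rw [div_eq_div_iff (by positivity) (by nlinarith)]
  linear_combination (((v:ℝ)-1)*((k:ℝ)-1)) * hbkR - ((v:ℝ)*((v:ℝ)-1)) * hlvR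
end
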